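/- Completeness of the translation t for K4: let Q = {q_n} be fresh atoms and define t: L∞ → modal language by commuting with atoms and booleans and (□n A)^t = □(⋀_{i=0}^{n} q_i → A^t). If Γ^t ⊢_{K4(Q)} A^t in ordinary unimodal K4 (over atoms including Q), then Γ ⊢_{K4_h} A. -/

import Mathlib

/-- Poly-modal formulas with modalities `□n` for `n : ℕ`. -/
inductive Fm : Type
  | atom : ℕ → Fm
  | bot  : Fm
  | and  : Fm → Fm → Fm
  | or   : Fm → Fm → Fm
  | imp  : Fm → Fm → Fm
  | neg  : Fm → Fm
  | box  : ℕ → Fm → Fm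
  deriving DecidableEq

def Fm.top : Fm := Fm.neg Fm.bot

/-- `i` occurs as a modality index in the formula. -/
def occursBox (i : ℕ) : Fm → Prop
  | .atom _ => False
  | .bot => False
  | .and A B => occursBox i A ∨ occursBox i B
  | .or A B => occursBox i A ∨ occursBox i B
  | .imp A B => occursBox i A ∨ occursBox i B
  | .neg A => occursBox i A
  | .box n A => i = n ∨ occursBox i A

/-- `n` is strictly greater than every modality index occurring in `A`
    (the paper's "`n > r(A)`"). -/
def BoxLt (A : Fm) (n : ℕ) : Prop := ∀ i, occursBox i A → i < n

/-- The language `L∞`: each box index strictly exceeds all box indices in its scope. -/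
inductive Linf : Fm → Prop
  | atom (k : ℕ) : Linf (.atom k)
  | bot : Linf .bot
  | and {A B : Fm} : Linf A → Linf B → Linf (.and A B)
  | or {A B : Fm} : Linf A → Linf B → Linf (.or A B)
  | imp {A B : Fm} : Linf A → Linf B → Linf (.imp A B)
  | neg {A : Fm} : Linf A → Linf (.neg A)
  | box {A : Fm} (n : ℕ) : Linf A → BoxLt A n → Linf (.box n A)

/-- Boolean evaluation treating atoms and boxed formulas as propositional atoms. -/
def evalWith (v : Fm → Bool) : Fm → Bool
  | .atom k => v (.atom k)
  | .bot => false
  | .and A B => evalWith v A && evalWith v B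
  | .or A B => evalWith v A || evalWith v B
  | .imp A B => !(evalWith v A) || evalWith v B
  | .neg A => !(evalWith v A)
  | .box n A => v (.box n A)

/-- Classical propositional tautologies (on `L∞`-formulas as atoms). -/
def Taut (A : Fm) : Prop := ∀ v, evalWith v A = true

def axH (F : Fm) : Prop := ∃ A n, Linf (Fm.box n A) ∧ F = (Fm.box n A).imp (Fm.box (n+1) A)
def axK (F : Fm) : Prop := ∃ A B n, Linf (Fm.box n (A.imp B)) ∧
    F = (Fm.box n (A.imp B)).imp ((Fm.box n A).imp (Fm.box n B))
def axFour (F : Fm) : Prop := ∃ A n, Linf (Fm.box n A) ∧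
    F = (Fm.box n A).imp (Fm.box (n+1) (Fm.box n A))
def axD (F : Fm) : Prop := ∃ n, F = Fm.neg (Fm.box n Fm.bot)
def axT (F : Fm) : Prop := ∃ A n, Linf (Fm.box n A) ∧ F = (Fm.box n A).imp A
def axL (F : Fm) : Prop := ∃ A n, Linf (Fm.box n A) ∧
    F = (Fm.box (n+1) ((Fm.box n A).imp A)).imp (Fm.box n A)
def axFive (F : Fm) : Prop := ∃ A n, Linf (Fm.box n A) ∧
    F = ((Fm.box n A).neg).imp (Fm.box (n+1) ((Fm.box n A).neg))

/-- Hilbert-style provability over `L∞` from a set of axiom (schema instances):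
    classical tautologies, modus ponens, and necessitation restricted to `n > r(A)`. -/
inductive Prv (Ax : Fm → Prop) : Fm → Prop
  | ax {A : Fm} : Ax A → Prv Ax A
  | taut {A : Fm} : Linf A → Taut A → Prv Ax A
  | mp {A B : Fm} : Prv Ax (A.imp B) → Prv Ax A → Prv Ax B
  | nec {A : Fm} (n : ℕ) : Prv Ax A → BoxLt A n → Prv Ax (Fm.box n A)

def K4hAx (F : Fm) : Prop := axH F ∨ axK F ∨ axFour F
def KD4hAx (F : Fm) : Prop := K4hAx F ∨ axD F
def S4hAx (F : Fm) : Prop := K4hAx F ∨ axT F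
def GLhAx (F : Fm) : Prop := K4hAx F ∨ axL F
def KD45hAx (F : Fm) : Prop := KD4hAx F ∨ axFive F

def K4h : Fm → Prop := Prv K4hAx
def KD4h : Fm → Prop := Prv KD4hAx
def S4h : Fm → Prop := Prv S4hAx
def GLh : Fm → Prop := Prv GLhAx

def conjList (l : List Fm) : Fm := l.foldr Fm.and Fm.top
def disjList (l : List Fm) : Fm := l.foldr Fm.or Fm.bot

/-- `Γ ⊢_L A` : some finite conjunction of members of `Γ` implies `A` in `L`. -/
def Deriv (Ax : Fm → Prop) (Γ : Set Fm) (A : Fm) : Prop :=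
  ∃ l : List Fm, (∀ B ∈ l, B ∈ Γ) ∧ Prv Ax ((conjList l).imp A)

/-- Ordinary unimodal formulas over the original atoms together with
    fresh atoms `q n`. -/
inductive MFm : Type
  | atom : ℕ → MFm
  | q : ℕ → MFm
  | bot : MFm
  | and : MFm → MFm → MFm
  | or : MFm → MFm → MFm
  | imp : MFm → MFm → MFm
  | neg : MFm → MFm
  | box : MFm → MFm
  deriving DecidableEq

def mevalWith (v : MFm → Bool) : MFm → Bool
  | .atom k => v (.atom k)
  | .q k => v (.q k)
  | .bot => false
  | .and A B => mevalWith v A && mevalWith v B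
  | .or A B => mevalWith v A || mevalWith v B
  | .imp A B => !(mevalWith v A) || mevalWith v B
  | .neg A => !(mevalWith v A)
  | .box A => v (.box A)

def MTaut (A : MFm) : Prop := ∀ v, mevalWith v A = true

/-- Ordinary unimodal `K4` over the language including the atoms `q`. -/
inductive K4Q : MFm → Prop
  | taut {A} : MTaut A → K4Q A
  | axK (A B : MFm) : K4Q ((MFm.box (A.imp B)).imp ((MFm.box A).imp (MFm.box B)))
  | axFour (A : MFm) : K4Q ((MFm.box A).imp (MFm.box (MFm.box A)))
  | mp {A B} : K4Q (A.imp B) → K4Q A → K4Q B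
  | nec {A} : K4Q A → K4Q (MFm.box A)

/-- Ordinary unimodal `S4` over the language including the atoms `q`. -/
inductive S4Q : MFm → Prop
  | taut {A} : MTaut A → S4Q A
  | axK (A B : MFm) : S4Q ((MFm.box (A.imp B)).imp ((MFm.box A).imp (MFm.box B)))
  | axFour (A : MFm) : S4Q ((MFm.box A).imp (MFm.box (MFm.box A)))
  | axT (A : MFm) : S4Q ((MFm.box A).imp A)
  | mp {A B} : S4Q (A.imp B) → S4Q A → S4Q B
  | nec {A} : S4Q A → S4Q (MFm.box A)

/-- `q_0 ∧ ⋯ ∧ q_n`. -/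
def qconj : ℕ → MFm
  | 0 => MFm.q 0
  | n+1 => (qconj n).and (MFm.q (n+1))

/-- The translation `t`: `(□n A)^t = □(q_0 ∧ ⋯ ∧ q_n → A^t)`. -/
def trT : Fm → MFm
  | .atom k => .atom k
  | .bot => .bot
  | .and A B => (trT A).and (trT B)
  | .or A B => (trT A).or (trT B)
  | .imp A B => (trT A).imp (trT B)
  | .neg A => (trT A).neg
  | .box n A => MFm.box ((qconj n).imp (trT A))

def conjM (l : List MFm) : MFm := l.foldr MFm.and (MFm.neg MFm.bot)

/-- `Γ ⊢_L A` for a unimodal system `L`. -/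
def DerivM (P : MFm → Prop) (Γ : Set MFm) (A : MFm) : Prop :=
  ∃ l : List MFm, (∀ B ∈ l, B ∈ Γ) ∧ P ((conjM l).imp A)

/-!
Canonical model. A world is a maximal `K4_h`-consistent set `X` of `L∞`-formulas together with
a level `k`, and `q_i` holds exactly at the worlds of level `> i`, so that `q_0 ∧ ⋯ ∧ q_n → ·`
relativises `□` to the worlds of level `> n`. A world of level `k` sees the worlds of lower
level `j` that inherit `C` from every `□m C ∈ X` with `m < j`, and `□m C` itself when
`m + 1 < j`; this relation is transitive, so `K4(Q)` is sound. The truth lemma identifies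
`(□n A)^t` with `□n A ∈ X` at levels above `n + 1`. Its existence step takes a level-`(n+1)`
extension of `{C | r(C) < n, □n C ∈ X} ∪ {¬A}`: this set is consistent since `□n` is closed
under `K4_h`-derivations from formulas of rank `< n` (necessitation at `n` and `K_h`), and
`H` and `4_h` supply the boxed formulas of lower index that the successor has to inherit.
-/

lemma BoxLt.mono {A : Fm} {m n : ℕ} (h : BoxLt A m) (hmn : m ≤ n) : BoxLt A n :=
  fun i hi => (h i hi).trans_le hmn

lemma BoxLt.box {A : Fm} {n : ℕ} (h : BoxLt A n) : BoxLt (Fm.box n A) (n + 1) := by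
  rintro i (rfl | hi)
  exacts [Nat.lt_succ_self i, (h i hi).trans (Nat.lt_succ_self n)]

lemma Fm.exists_boxLt : ∀ A : Fm, ∃ n, BoxLt A n
  | .atom _ | .bot => ⟨0, fun _ h => h.elim⟩
  | .and A B | .or A B | .imp A B => by
    obtain ⟨m, hm⟩ := A.exists_boxLt
    obtain ⟨n, hn⟩ := B.exists_boxLt
    exact ⟨max m n, fun i hi => hi.elim (fun h => (hm.mono (le_max_left m n)) i h)
      (fun h => (hn.mono (le_max_right m n)) i h)⟩
  | .neg A => A.exists_boxLt
  | .box n A => by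
    obtain ⟨m, hm⟩ := A.exists_boxLt
    refine ⟨max m n + 1, ?_⟩
    rintro i (rfl | hi)
    · omega
    · have := hm i hi
      omega

lemma Linf.box_inv {n : ℕ} {A : Fm} (h : Linf (Fm.box n A)) : Linf A ∧ BoxLt A n := by
  cases h
  exact ⟨‹_›, ‹_›⟩

lemma Linf.imp_inv {A B : Fm} (h : Linf (A.imp B)) : Linf A ∧ Linf B := by
  cases h
  exact ⟨‹_›, ‹_›⟩

lemma linf_conjList_iff {l : List Fm} : Linf (conjList l) ↔ ∀ B ∈ l, Linf B := by
  induction l with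
  | nil => simpa [conjList, Fm.top] using Linf.neg Linf.bot
  | cons A l ih =>
    simp only [conjList, List.foldr_cons, List.forall_mem_cons] at ih ⊢
    rw [← ih]
    exact ⟨fun h => by cases h; exact ⟨‹_›, ‹_›⟩, fun h => h.1.and h.2⟩

@[simp]
lemma evalWith_conjList (v : Fm → Bool) (l : List Fm) :
    evalWith v (conjList l) = l.all (evalWith v) := by
  induction l with
  | nil => rfl
  | cons A l ih => simp [conjList, evalWith, ← ih]

lemma K4hAx.linf {F : Fm} (h : K4hAx F) : Linf F := by
  obtain ⟨A, n, hA, rfl⟩ | ⟨A, B, n, hAB, rfl⟩ | ⟨A, n, hA, rfl⟩ := h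
  · obtain ⟨hA', hn⟩ := hA.box_inv
    exact hA.imp (.box _ hA' (hn.mono n.le_succ))
  · obtain ⟨hAB', hn⟩ := hAB.box_inv
    obtain ⟨hA', hB'⟩ := hAB'.imp_inv
    exact hAB.imp ((Linf.box n hA' fun i hi => hn i (.inl hi)).imp
      (.box n hB' fun i hi => hn i (.inr hi)))
  · exact hA.imp (.box _ hA hA.box_inv.2.box)

lemma Prv.linf {F : Fm} (h : Prv K4hAx F) : Linf F := by
  induction h with
  | ax h => exact h.linf
  | taut hA _ => exact hA
  | mp _ _ ih _ => exact ih.imp_inv.2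
  | nec n _ hn ih => exact .box n ih hn

lemma Prv.of_taut (l : List Fm) {C : Fm} (hl : ∀ B ∈ l, Prv K4hAx B) (hC : Linf C)
    (h : ∀ v, (∀ B ∈ l, evalWith v B = true) → evalWith v C = true) : Prv K4hAx C := by
  induction l generalizing C with
  | nil => exact .taut hC fun v => h v (by simp)
  | cons B l ih =>
    simp only [List.forall_mem_cons] at hl h
    refine .mp (ih hl.2 (hl.1.linf.imp hC) fun v hv => ?_) hl.1
    cases hB : evalWith v B
    · simp [evalWith, hB]
    · simp [evalWith, h v ⟨hB, hv⟩]

lemma Deriv.linf {X : Set Fm} {A : Fm} (h : Deriv K4hAx X A) : Linf A := by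
  obtain ⟨_, _, h⟩ := h
  exact h.linf.imp_inv.2

lemma Deriv.of_prv {X : Set Fm} {A : Fm} (h : Prv K4hAx A) : Deriv K4hAx X A :=
  ⟨[], by simp, .of_taut [A] (by simpa using h)
    ((linf_conjList_iff.2 (by simp)).imp h.linf) fun v hv => by simp_all [evalWith]⟩

lemma Deriv.of_mem {X : Set Fm} {A : Fm} (hA : Linf A) (h : A ∈ X) : Deriv K4hAx X A :=
  ⟨[A], by simpa using h, .of_taut [] (by simp) ((linf_conjList_iff.2 (by simpa using hA)).imp hA)
    fun v _ => by cases hv : evalWith v A <;> simp [evalWith, hv]⟩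

lemma Deriv.mp {X : Set Fm} {A B : Fm} (hAB : Deriv K4hAx X (A.imp B))
    (hA : Deriv K4hAx X A) : Deriv K4hAx X B := by
  obtain ⟨l₁, hl₁, h₁⟩ := hAB
  obtain ⟨l₂, hl₂, h₂⟩ := hA
  have hc : Linf (conjList (l₁ ++ l₂)) := by
    simp only [linf_conjList_iff, List.mem_append, or_imp, forall_and] at h₁ h₂ ⊢
    exact ⟨linf_conjList_iff.1 h₁.linf.imp_inv.1, linf_conjList_iff.1 h₂.linf.imp_inv.1⟩
  refine ⟨l₁ ++ l₂, by simpa [or_imp, forall_and] using ⟨hl₁, hl₂⟩,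
    .of_taut [(conjList l₁).imp (A.imp B), (conjList l₂).imp A] (by simp [h₁, h₂])
      (hc.imp h₁.linf.imp_inv.2.imp_inv.2) fun v hv => ?_⟩
  simp [evalWith] at hv ⊢
  grind

lemma Deriv.imp_of_insert {X : Set Fm} {A B : Fm} (hA : Linf A)
    (h : Deriv K4hAx (insert A X) B) : Deriv K4hAx X (A.imp B) := by
  obtain ⟨l, hl, hp⟩ := h
  obtain ⟨hc, hB⟩ := hp.linf.imp_inv
  have hc' : Linf (conjList (l.filter (· ≠ A))) := by
    simp only [linf_conjList_iff, List.mem_filter] at hc ⊢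
    exact fun C hC => hc C hC.1
  refine ⟨l.filter (· ≠ A), fun C hC => ?_, .of_taut [_] (by simpa using hp)
    (hc'.imp (hA.imp hB)) fun v hv => ?_⟩
  · simp only [List.mem_filter, decide_eq_true_eq] at hC
    exact (hl C hC.1).resolve_left hC.2
  · simp [evalWith] at hv ⊢
    grind

structure IsMCS (X : Set Fm) : Prop where
  linf : ∀ A ∈ X, Linf A
  consistent : ¬Deriv K4hAx X .bot
  maximal : ∀ A, Linf A → ¬Deriv K4hAx (insert A X) .bot → A ∈ X

namespace IsMCS

variable {X : Set Fm}

lemma deriv_insert_bot (hX : IsMCS X) {A : Fm} (hA : Linf A) (h : A ∉ X) :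
    Deriv K4hAx (insert A X) .bot :=
  not_not.1 (mt (hX.maximal A hA) h)

lemma mem_of_deriv (hX : IsMCS X) {A : Fm} (h : Deriv K4hAx X A) : A ∈ X := by
  by_contra hA
  exact hX.consistent (((hX.deriv_insert_bot h.linf hA).imp_of_insert h.linf).mp h)

lemma mem_of_prv (hX : IsMCS X) {A : Fm} (h : Prv K4hAx A) : A ∈ X :=
  hX.mem_of_deriv (.of_prv h)

lemma mem_of_imp_mem (hX : IsMCS X) {A B : Fm} (hAB : A.imp B ∈ X) (hA : A ∈ X) : B ∈ X :=
  hX.mem_of_deriv ((Deriv.of_mem (hX.linf _ hAB) hAB).mp (.of_mem (hX.linf A hA) hA))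

lemma mem_of_prv_imp (hX : IsMCS X) {A B : Fm} (hA : A ∈ X) (h : Prv K4hAx (A.imp B)) : B ∈ X :=
  hX.mem_of_imp_mem (hX.mem_of_prv h) hA

lemma mem_of_taut (hX : IsMCS X) (l : List Fm) {C : Fm} (hl : ∀ B ∈ l, B ∈ X) (hC : Linf C)
    (h : ∀ v, (∀ B ∈ l, evalWith v B = true) → evalWith v C = true) : C ∈ X := by
  have hl' : Linf (conjList l) := linf_conjList_iff.2 fun B hB => hX.linf B (hl B hB)
  refine hX.mem_of_deriv ⟨l, hl, .taut (hl'.imp hC) fun v => ?_⟩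
  cases hv : l.all (evalWith v)
  · simp [evalWith, hv]
  · simp [evalWith, h v (by simpa using hv)]

lemma bot_not_mem (hX : IsMCS X) : .bot ∉ X :=
  fun h => hX.consistent (.of_mem .bot h)

lemma neg_mem_iff (hX : IsMCS X) {A : Fm} (hA : Linf A) : A.neg ∈ X ↔ A ∉ X := by
  refine ⟨fun h hA' => hX.bot_not_mem (hX.mem_of_taut [A, A.neg] (by simp [h, hA']) .bot
    fun v hv => by simp_all [evalWith]), fun h => ?_⟩
  exact hX.mem_of_prv_imp (hX.mem_of_deriv ((hX.deriv_insert_bot hA h).imp_of_insert hA))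
    (.taut ((hA.imp .bot).imp hA.neg) fun v => by simp only [evalWith]; cases evalWith v A <;> rfl)

lemma imp_mem_iff (hX : IsMCS X) {A B : Fm} (hA : Linf A) (hB : Linf B) :
    A.imp B ∈ X ↔ (A ∈ X → B ∈ X) := by
  refine ⟨hX.mem_of_imp_mem, fun h => ?_⟩
  by_cases hA' : A ∈ X
  · exact hX.mem_of_taut [B] (by simpa using h hA') (hA.imp hB) fun v hv => by simp_all [evalWith]
  · exact hX.mem_of_taut [A.neg] (by simpa [hX.neg_mem_iff hA] using hA') (hA.imp hB)
      fun v hv => by simp_all [evalWith]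

lemma and_mem_iff (hX : IsMCS X) {A B : Fm} (hA : Linf A) (hB : Linf B) :
    A.and B ∈ X ↔ A ∈ X ∧ B ∈ X := by
  refine ⟨fun h => ⟨?_, ?_⟩, fun h => ?_⟩
  · exact hX.mem_of_taut [A.and B] (by simpa using h) hA fun v hv => by simp_all [evalWith]
  · exact hX.mem_of_taut [A.and B] (by simpa using h) hB fun v hv => by simp_all [evalWith]
  · exact hX.mem_of_taut [A, B] (by simpa using h) (hA.and hB) fun v hv => by simp_all [evalWith]

lemma or_mem_iff (hX : IsMCS X) {A B : Fm} (hA : Linf A) (hB : Linf B) :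
    A.or B ∈ X ↔ A ∈ X ∨ B ∈ X := by
  refine ⟨fun h => ?_, fun h => ?_⟩
  · by_contra! hAB
    rw [← hX.neg_mem_iff hA, ← hX.neg_mem_iff hB] at hAB
    exact hX.bot_not_mem (hX.mem_of_taut [A.or B, A.neg, B.neg] (by simp [h, hAB]) .bot
      fun v hv => by simp [evalWith] at hv; grind)
  · rcases h with h | h
    · exact hX.mem_of_taut [A] (by simpa using h) (hA.or hB) fun v hv => by simp_all [evalWith]
    · exact hX.mem_of_taut [B] (by simpa using h) (hA.or hB) fun v hv => by simp_all [evalWith]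

lemma box_mem_of_le (hX : IsMCS X) {m n : ℕ} {C : Fm} (hmn : m ≤ n) (h : Fm.box m C ∈ X) :
    Fm.box n C ∈ X := by
  induction n, hmn using Nat.le_induction with
  | base => exact h
  | succ n _ ih => exact hX.mem_of_prv_imp ih (.ax (.inl ⟨C, n, hX.linf _ ih, rfl⟩))

lemma box_box_mem (hX : IsMCS X) {m n : ℕ} {C : Fm} (hmn : m < n) (h : Fm.box m C ∈ X) :
    Fm.box n (Fm.box m C) ∈ X :=
  hX.box_mem_of_le hmn (hX.mem_of_prv_imp h (.ax (.inr (.inr ⟨C, m, hX.linf _ h, rfl⟩))))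

lemma box_mem_of_deriv (hX : IsMCS X) {n : ℕ} {B : Fm}
    (h : Deriv K4hAx {C | BoxLt C n ∧ Fm.box n C ∈ X} B) (hB : BoxLt B n) : Fm.box n B ∈ X := by
  obtain ⟨l, hl, hp⟩ := h
  induction l generalizing B with
  | nil =>
    refine hX.mem_of_prv (.nec n (.of_taut [_] (by simpa using hp) hp.linf.imp_inv.2
      fun v hv => ?_) hB)
    simp_all [evalWith]
  | cons C l ih =>
    simp only [List.forall_mem_cons] at hl
    obtain ⟨hc, hB'⟩ := hp.linf.imp_inv
    obtain ⟨hC, hl'⟩ := linf_conjList_iff.1 hc |> List.forall_mem_cons.1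
    have hCB : Fm.box n (C.imp B) ∈ X := by
      refine ih (fun i hi => hi.elim (hl.1.1 i) (hB i)) hl.2 (.of_taut [_] (by simpa using hp)
        ((linf_conjList_iff.2 hl').imp (hC.imp hB')) fun v hv => ?_)
      simp [evalWith] at hv ⊢
      grind
    have hK : Prv K4hAx ((Fm.box n (C.imp B)).imp ((Fm.box n C).imp (Fm.box n B))) :=
      .ax (.inr (.inl ⟨C, B, n, hX.linf _ hCB, rfl⟩))
    exact hX.mem_of_imp_mem (hX.mem_of_prv_imp hCB hK) hl.1.2

end IsMCS

lemma exists_isMCS_superset {X : Set Fm} (hX : ∀ A ∈ X, Linf A) (hc : ¬Deriv K4hAx X .bot) :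
    ∃ Y, X ⊆ Y ∧ IsMCS Y := by
  let S : Set (Set Fm) := {Y | X ⊆ Y ∧ (∀ A ∈ Y, Linf A) ∧ ¬Deriv K4hAx Y .bot}
  have hchains : ∀ c ⊆ S, IsChain (· ⊆ ·) c → c.Nonempty → ∃ ub ∈ S, ∀ Y ∈ c, Y ⊆ ub := by
    intro c hcS hchain hne
    refine ⟨⋃₀ c, ⟨?_, ?_, ?_⟩, fun Y hY => Set.subset_sUnion_of_mem hY⟩
    · obtain ⟨Y, hY⟩ := hne
      exact (hcS hY).1.trans (Set.subset_sUnion_of_mem hY)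
    · rintro A ⟨Y, hY, hA⟩
      exact (hcS hY).2.1 A hA
    · rintro ⟨l, hl, hp⟩
      obtain ⟨Y, hY, hlY⟩ := hchain.directedOn.exists_mem_subset_of_finite_of_subset_sUnion hne
        l.finite_toSet hl
      exact (hcS hY).2.2 ⟨l, hlY, hp⟩
  obtain ⟨Y, hXY, hY⟩ := zorn_subset_nonempty S hchains X ⟨subset_rfl, hX, hc⟩
  refine ⟨Y, hXY, hY.prop.2.1, hY.prop.2.2, fun A hA hcons => ?_⟩
  have hmem : insert A Y ∈ S := ⟨hXY.trans (Set.subset_insert A Y),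
    fun B hB => hB.elim (fun h => h ▸ hA) (hY.prop.2.1 B), hcons⟩
  exact hY.le_of_ge hmem (Set.subset_insert A Y) (Set.mem_insert A Y)

lemma exists_isMCS_not_mem {X : Set Fm} {A : Fm} (hX : ∀ B ∈ X, Linf B) (hA : Linf A)
    (h : ¬Deriv K4hAx X A) : ∃ Y, X ⊆ Y ∧ IsMCS Y ∧ A ∉ Y := by
  have hc : ¬Deriv K4hAx (insert A.neg X) .bot := fun hd =>
    h ((Deriv.of_prv (.taut ((hA.neg.imp .bot).imp hA) fun v => by
      simp only [evalWith]; cases evalWith v A <;> rfl)).mp (hd.imp_of_insert hA.neg))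
  obtain ⟨Y, hXY, hY⟩ :=
    exists_isMCS_superset (fun B hB => hB.elim (fun h => h ▸ hA.neg) (hX B)) hc
  exact ⟨Y, (Set.subset_insert _ _).trans hXY, hY, (hY.neg_mem_iff hA).1 (hXY (Set.mem_insert _ _))⟩

lemma IsMCS.exists_not_mem_of_box_not_mem {X : Set Fm} (hX : IsMCS X) {n : ℕ} {B : Fm}
    (hB : Linf (Fm.box n B)) (h : Fm.box n B ∉ X) :
    ∃ Y, IsMCS Y ∧ B ∉ Y ∧ ∀ C, BoxLt C n → Fm.box n C ∈ X → C ∈ Y := by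
  obtain ⟨Y, hXY, hY, hBY⟩ := exists_isMCS_not_mem (X := {C | BoxLt C n ∧ Fm.box n C ∈ X})
    (fun C hC => (hX.linf _ hC.2).box_inv.1) hB.box_inv.1
    (fun hd => h (hX.box_mem_of_deriv hd hB.box_inv.2))
  exact ⟨Y, hY, hBY, fun C hC hCX => hXY ⟨hC, hCX⟩⟩

def MFm.Sat {W : Type*} (R : W → W → Prop) (va vq : ℕ → W → Prop) : MFm → W → Prop
  | .atom k, w => va k w
  | .q i, w => vq i w
  | .bot, _ => False
  | .and A B, w => A.Sat R va vq w ∧ B.Sat R va vq w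
  | .or A B, w => A.Sat R va vq w ∨ B.Sat R va vq w
  | .imp A B, w => A.Sat R va vq w → B.Sat R va vq w
  | .neg A, w => ¬A.Sat R va vq w
  | .box A, w => ∀ u, R w u → A.Sat R va vq u

open Classical in
lemma MFm.mevalWith_sat_iff {W : Type*} (R : W → W → Prop) (va vq : ℕ → W → Prop) (w : W)
    (A : MFm) : mevalWith (fun G => decide (G.Sat R va vq w)) A = true ↔ A.Sat R va vq w := by
  induction A <;> simp only [mevalWith, decide_eq_true_eq] <;>
    simp [MFm.Sat, ← Bool.not_eq_true, imp_iff_not_or, *]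

lemma K4Q.sat {W : Type*} {R : W → W → Prop} [IsTrans W R] (va vq : ℕ → W → Prop)
    {A : MFm} (h : K4Q A) (w : W) : A.Sat R va vq w := by
  induction h generalizing w with
  | taut h => exact (MFm.mevalWith_sat_iff ..).1 (h _)
  | axK A B => exact fun hAB hA u hu => hAB u hu (hA u hu)
  | axFour A => exact fun hA u hu x hx => hA x (_root_.trans hu hx)
  | mp _ _ ih₁ ih₂ => exact ih₁ w (ih₂ w)
  | nec _ ih => exact fun u _ => ih u

structure CanonicalWorld where
  carrier : Set Fm
  isMCS : IsMCS carrier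
  level : ℕ

namespace CanonicalWorld

def Rel (w u : CanonicalWorld) : Prop :=
  u.level < w.level ∧ ∀ m C, Fm.box m C ∈ w.carrier →
    (m < u.level → C ∈ u.carrier) ∧ (m + 1 < u.level → Fm.box m C ∈ u.carrier)

instance : IsTrans CanonicalWorld Rel := ⟨fun w u x hwu hux => by
  refine ⟨hux.1.trans hwu.1, fun m C hm => ?_⟩
  have := hux.1
  have hmu := fun hmx : m < x.level => (hwu.2 m C hm).2 (by omega)
  exact ⟨fun hmx => (hux.2 m C (hmu hmx)).1 hmx, fun hmx => (hux.2 m C (hmu (by omega))).2 hmx⟩⟩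

def Sat (A : MFm) (w : CanonicalWorld) : Prop :=
  A.Sat Rel (fun k w => Fm.atom k ∈ w.carrier) (fun i w => i < w.level) w

lemma sat_qconj_iff (n : ℕ) (w : CanonicalWorld) : Sat (qconj n) w ↔ n < w.level := by
  induction n with
  | zero => rfl
  | succ n ih =>
    simp only [Sat, qconj, MFm.Sat] at ih ⊢
    rw [ih]
    omega

lemma exists_rel_of_box_not_mem (w : CanonicalWorld) {n : ℕ} {B : Fm} (hB : Linf (Fm.box n B))
    (h : Fm.box n B ∉ w.carrier) (hn : n + 1 < w.level) :
    ∃ u, Rel w u ∧ u.level = n + 1 ∧ B ∉ u.carrier := by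
  obtain ⟨Y, hY, hBY, hsub⟩ := w.isMCS.exists_not_mem_of_box_not_mem hB h
  refine ⟨⟨Y, hY, n + 1⟩, ⟨hn, fun m C hm => ⟨fun hmn => ?_, fun hmn => ?_⟩⟩, rfl, hBY⟩
  · have hmn : m ≤ n := by simpa [Nat.lt_succ_iff] using hmn
    exact hsub C ((w.isMCS.linf _ hm).box_inv.2.mono hmn) (w.isMCS.box_mem_of_le hmn hm)
  · have hmn : m < n := by simpa using hmn
    exact hsub _ ((w.isMCS.linf _ hm).box_inv.2.box.mono hmn) (w.isMCS.box_box_mem hmn hm)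

lemma sat_trT_iff {A : Fm} (hA : Linf A) {k : ℕ} (hk : BoxLt A k) (w : CanonicalWorld)
    (hw : k < w.level) : Sat (trT A) w ↔ A ∈ w.carrier := by
  induction hA generalizing k w with
  | atom => rfl
  | bot => simpa [trT, Sat, MFm.Sat] using w.isMCS.bot_not_mem
  | and hA hB ihA ihB =>
    rw [w.isMCS.and_mem_iff hA hB, ← ihA (fun i hi => hk i (.inl hi)) w hw,
      ← ihB (fun i hi => hk i (.inr hi)) w hw]
    rfl
  | or hA hB ihA ihB =>
    rw [w.isMCS.or_mem_iff hA hB, ← ihA (fun i hi => hk i (.inl hi)) w hw,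
      ← ihB (fun i hi => hk i (.inr hi)) w hw]
    rfl
  | imp hA hB ihA ihB =>
    rw [w.isMCS.imp_mem_iff hA hB, ← ihA (fun i hi => hk i (.inl hi)) w hw,
      ← ihB (fun i hi => hk i (.inr hi)) w hw]
    rfl
  | neg hA ih =>
    rw [w.isMCS.neg_mem_iff hA, ← ih hk w hw]
    rfl
  | box n hA hn ih =>
    have hnk : n < k := hk n (.inl rfl)
    change (∀ u, Rel w u → Sat (qconj n) u → Sat (trT _) u) ↔ _
    simp only [sat_qconj_iff]
    refine ⟨fun h => ?_, fun h u hwu hnu => (ih hn u hnu).2 ((hwu.2 n _ h).1 hnu)⟩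
    by_contra hnot
    obtain ⟨u, hwu, hu, hAu⟩ := exists_rel_of_box_not_mem w (.box n hA hn) hnot (by omega)
    exact hAu ((ih hn u (by omega)).1 (h u hwu (by omega)))

end CanonicalWorld

lemma trT_conjList (l : List Fm) : trT (conjList l) = conjM (l.map trT) := by
  induction l with
  | nil => rfl
  | cons A l ih => exact congrArg (MFm.and (trT A)) ih

lemma prv_of_k4Q_trT {F : Fm} (hF : Linf F) (h : K4Q (trT F)) : Prv K4hAx F := by
  by_contra hF'
  have hnd : ¬Deriv K4hAx ∅ F := by
    rintro ⟨l, hl, hp⟩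
    obtain rfl : l = [] := List.eq_nil_iff_forall_not_mem.2 hl
    exact hF' (.of_taut [_] (by simpa using hp) hF fun v hv => by simpa [evalWith] using hv)
  obtain ⟨X, -, hX, hFX⟩ := exists_isMCS_not_mem (by simp) hF hnd
  obtain ⟨k, hk⟩ := F.exists_boxLt
  exact hFX ((CanonicalWorld.sat_trT_iff hF hk ⟨X, hX, k + 1⟩ k.lt_succ_self).1 (h.sat _ _ _))

/-- completeness of the translation `t` for `K4`:
    if `Γ^t ⊢_{K4(Q)} A^t` then `Γ ⊢_{K4_h} A`. -/
theorem trT_complete_K4 (Γ : Set Fm) (A : Fm)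
    (hΓ : ∀ B ∈ Γ, Linf B) (hA : Linf A)
    (h : DerivM K4Q (trT '' Γ) (trT A)) :
    Deriv K4hAx Γ A := by
  obtain ⟨lM, hlM, hp⟩ := h
  obtain ⟨l, rfl⟩ : lM ∈ Set.range (List.map fun B : Γ => trT B) := by
    rw [Set.range_list_map]
    intro C hC
    obtain ⟨B, hB, rfl⟩ := hlM C hC
    exact ⟨⟨B, hB⟩, rfl⟩
  refine ⟨l.map (↑), by simp_all, prv_of_k4Q_trT ?_ ?_⟩
  · exact (linf_conjList_iff.2 (by simp_all)).imp hA
  · rwa [trT, trT_conjList, List.map_map]
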